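/- Let M be a q-matroid of rank one on E = F_q^n with loop space L of dimension t, where 0 < t < n-1 (i.e., ρ(U) = 0 if U ⊆ L and ρ(U) = 1 otherwise). Then there is no F_q-linear rank-metric code C ⊆ F_q^{n×m} with 1 < m < n - t representing M. -/

import Mathlib

open Matrix

variable {F : Type*} [Field F]

/-- Column space of a matrix: the span of its columns. -/
def colSpace {n m : ℕ} (M : Matrix (Fin n) (Fin m) F) : Submodule F (Fin n → F) :=
  Submodule.span F (Set.range Mᵀ)

lemma colSpace_le_iff {n m : ℕ} (M : Matrix (Fin n) (Fin m) F) (U : Submodule F (Fin n → F)) :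
    colSpace M ≤ U ↔ ∀ j, Mᵀ j ∈ U := by
  rw [colSpace, Submodule.span_le]
  constructor
  · intro h j; exact h ⟨j, rfl⟩
  · rintro h _ ⟨j, rfl⟩; exact h j

/-- `C(U)`: the codewords of `C` whose column space is contained in `U`. -/
def codeCU {n m : ℕ} (C : Submodule F (Matrix (Fin n) (Fin m) F))
    (U : Submodule F (Fin n → F)) : Submodule F (Matrix (Fin n) (Fin m) F) where
  carrier := {M | M ∈ C ∧ colSpace M ≤ U}
  add_mem' := by
    rintro a b ⟨haC, ha⟩ ⟨hbC, hb⟩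
    refine ⟨C.add_mem haC hbC, (colSpace_le_iff _ _).2 fun j => ?_⟩
    have h := U.add_mem ((colSpace_le_iff a U).1 ha j) ((colSpace_le_iff b U).1 hb j)
    simp only [Matrix.transpose_add]; exact h
  zero_mem' := by
    exact ⟨C.zero_mem, (colSpace_le_iff _ _).2 fun j => U.zero_mem⟩
  smul_mem' := by
    rintro c a ⟨haC, ha⟩
    refine ⟨C.smul_mem c haC, (colSpace_le_iff _ _).2 fun j => ?_⟩
    have h := U.smul_mem c ((colSpace_le_iff a U).1 ha j)
    simp only [Matrix.transpose_smul]; exact h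

/-- Orthogonal complement with respect to the standard (dot-product) bilinear form. -/
def perp {n : ℕ} (U : Submodule F (Fin n → F)) : Submodule F (Fin n → F) where
  carrier := {v | ∀ u ∈ U, v ⬝ᵥ u = 0}
  add_mem' := by
    intro a b ha hb u hu
    rw [add_dotProduct, ha u hu, hb u hu, add_zero]
  zero_mem' := by
    intro u hu
    rw [zero_dotProduct]
  smul_mem' := by
    intro c a ha u hu
    rw [smul_dotProduct, ha u hu, smul_zero]

/-- The minimum rank distance of a matrix code. -/
noncomputable def minRankDist {n m : ℕ} (C : Submodule F (Matrix (Fin n) (Fin m) F)) : ℕ :=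
  sInf {r : ℕ | ∃ M ∈ C, M ≠ 0 ∧ M.rank = r}

/-- The rank function of the q-polymatroid associated to a matrix rank-metric code. -/
noncomputable def rhoCode {n m : ℕ} (C : Submodule F (Matrix (Fin n) (Fin m) F))
    (U : Submodule F (Fin n → F)) : ℚ :=
  ((Module.finrank F C : ℚ) - (Module.finrank F (codeCU C (perp U)) : ℚ)) / (m : ℚ)

/-!
A representation has `ρ(E) = dim C / m = 1`, so `C ≠ 0`, and every `U` with `ρ(U) = ρ(E)` has
`C(U^⊥) = 0`. A nonzero codeword `M` lies in `C(U^⊥)` for `U = colsp(M)^⊥`, yet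
`dim U = n - rank M ≥ n - m > t`, so `U ⊄ L` and `ρ(U) = 1`.
-/

section Perp

variable {n : ℕ}

lemma perp_top : perp (⊤ : Submodule F (Fin n → F)) = ⊥ := by
  classical
  refine (Submodule.eq_bot_iff _).2 fun v hv => funext fun i => ?_
  simpa using hv (Pi.single i 1) trivial

lemma le_perp_perp (U : Submodule F (Fin n → F)) : U ≤ perp (perp U) :=
  fun u hu _ hv => (dotProduct_comm _ _).trans (hv u hu)

lemma perp_colSpace_eq_ker {m : ℕ} (M : Matrix (Fin n) (Fin m) F) :
    perp (colSpace M) = LinearMap.ker Mᵀ.mulVecLin := by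
  ext v
  change (∀ u ∈ colSpace M, v ⬝ᵥ u = 0) ↔ Mᵀ *ᵥ v = 0
  constructor
  · exact fun hv => funext fun j =>
      (dotProduct_comm _ _).trans (hv _ (Submodule.subset_span ⟨j, rfl⟩))
  · intro hv u hu
    induction hu using Submodule.span_induction with
    | mem x hx =>
      obtain ⟨j, rfl⟩ := hx
      exact (dotProduct_comm _ _).trans (congrFun hv j)
    | zero => exact dotProduct_zero v
    | add x y _ _ hx hy => rw [dotProduct_add, hx, hy, add_zero]
    | smul c x _ hx => rw [dotProduct_smul, hx, smul_zero]

lemma finrank_perp_colSpace_add_rank {m : ℕ} (M : Matrix (Fin n) (Fin m) F) :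
    Module.finrank F (perp (colSpace M)) + M.rank = n := by
  rw [perp_colSpace_eq_ker, ← rank_transpose, add_comm, Matrix.rank,
    LinearMap.finrank_range_add_finrank_ker, Module.finrank_fin_fun]

end Perp

section RhoCode

variable {n m : ℕ} (C : Submodule F (Matrix (Fin n) (Fin m) F))

lemma codeCU_bot : codeCU C ⊥ = ⊥ := by
  refine (Submodule.eq_bot_iff _).2 fun M ⟨_, hM⟩ => ?_
  rw [← transpose_eq_zero]
  exact funext fun j => (Submodule.mem_bot F).1 ((colSpace_le_iff M ⊥).1 hM j)

lemma rhoCode_top : rhoCode C ⊤ = Module.finrank F C / m := by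
  rw [rhoCode, perp_top, codeCU_bot, finrank_bot, Nat.cast_zero, sub_zero]

lemma ne_bot_of_rhoCode_top_ne_zero (h : rhoCode C ⊤ ≠ 0) : C ≠ ⊥ := by
  rintro rfl
  simp [rhoCode_top] at h

lemma codeCU_perp_eq_bot_of_rhoCode_eq_top {U : Submodule F (Fin n → F)}
    (hρ : rhoCode C ⊤ ≠ 0) (hU : rhoCode C U = rhoCode C ⊤) : codeCU C (perp U) = ⊥ := by
  have hm : (m : ℚ) ≠ 0 := by
    rintro hm
    simp [rhoCode_top, hm] at hρ
  rw [rhoCode_top, rhoCode, div_left_inj' hm, sub_eq_self, Nat.cast_eq_zero] at hU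
  exact Submodule.finrank_eq_zero.1 hU

lemma rhoCode_perp_colSpace_ne_top {M : Matrix (Fin n) (Fin m) F} (hMC : M ∈ C) (hM : M ≠ 0)
    (hρ : rhoCode C ⊤ ≠ 0) : rhoCode C (perp (colSpace M)) ≠ rhoCode C ⊤ := by
  intro hU
  have hMmem : M ∈ codeCU C (perp (perp (colSpace M))) := ⟨hMC, le_perp_perp _⟩
  rw [codeCU_perp_eq_bot_of_rhoCode_eq_top C hρ hU] at hMmem
  exact hM ((Submodule.mem_bot F).1 hMmem)

end RhoCode

open scoped Classical in
theorem rank_one_not_representable_general {n t : ℕ}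
    (L : Submodule F (Fin n → F)) (hL : Module.finrank F L = t)
    (m : ℕ) (hm2 : m < n - t) :
    ¬ ∃ C : Submodule F (Matrix (Fin n) (Fin m) F),
        ∀ U : Submodule F (Fin n → F),
          rhoCode C U = if U ≤ L then (0 : ℚ) else 1 := by
  rintro ⟨C, hC⟩
  have not_le_L {U : Submodule F (Fin n → F)} (hU : t < Module.finrank F U) : ¬ U ≤ L :=
    fun h => (Submodule.finrank_mono h).not_gt (hL ▸ hU)
  have hρ : rhoCode C ⊤ = 1 := by
    rw [hC, if_neg (not_le_L (by rw [finrank_top, Module.finrank_fin_fun]; omega))]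
  obtain ⟨M, hMC, hM⟩ :=
    Submodule.exists_mem_ne_zero_of_ne_bot (ne_bot_of_rhoCode_top_ne_zero C (by simp [hρ]))
  have hUL : ¬ perp (colSpace M) ≤ L := by
    refine not_le_L ?_
    have hdim := finrank_perp_colSpace_add_rank M
    have hrank := M.rank_le_width
    omega
  exact rhoCode_perp_colSpace_ne_top C hMC hM (by simp [hρ]) (by rw [hC, if_neg hUL, hρ])

open scoped Classical in
/-- a rank-one q-matroid with loop space of dimension `t`, `0 < t < n-1`,
admits no representation by a matrix rank-metric code with `1 < m < n - t`. -/
theorem rank_one_not_representable [Fintype F] {n t : ℕ}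
    (L : Submodule F (Fin n → F)) (hL : Module.finrank F L = t)
    (ht0 : 0 < t) (ht : t < n - 1)
    (m : ℕ) (hm1 : 1 < m) (hm2 : m < n - t) :
    ¬ ∃ C : Submodule F (Matrix (Fin n) (Fin m) F),
        ∀ U : Submodule F (Fin n → F),
          rhoCode C U = if U ≤ L then (0 : ℚ) else 1 :=
  rank_one_not_representable_general L hL m hm2
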